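/- arXiv:0903.4830 — 4 statements merged into one kernel-verified Lean document; each statement's English description precedes it below -/
import Mathlib

section
/- For any convex body K in E^d, the inequalities X(K) ≤ I(K) ≤ 2·X(K) hold, where X(K) is the X-ray number and I(K) is the illumination number. -/
open scoped RealInnerProductSpace

def IsXRayed {d : ℕ} (K : Set (EuclideanSpace ℝ (Fin d)))
    (v p : EuclideanSpace ℝ (Fin d)) : Prop :=
  ∃ t : ℝ, p + t • v ∈ interior K

noncomputable def xrayNumber {d : ℕ} (K : Set (EuclideanSpace ℝ (Fin d))) : ℕ :=
  sInf {n | ∃ D : Finset (EuclideanSpace ℝ (Fin d)), D.card = n ∧ (∀ v ∈ D, v ≠ 0) ∧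
    ∀ p ∈ K, ∃ v ∈ D, IsXRayed K v p}

/-- A boundary point `b` is illuminated by the direction `v` if the open ray from `b`
in direction `v` meets the interior of `K`. -/
def Illuminates {d : ℕ} (K : Set (EuclideanSpace ℝ (Fin d)))
    (v b : EuclideanSpace ℝ (Fin d)) : Prop :=
  ∃ t : ℝ, 0 < t ∧ b + t • v ∈ interior K

/-- The illumination number of `K`. -/
noncomputable def illumNumber {d : ℕ} (K : Set (EuclideanSpace ℝ (Fin d))) : ℕ :=
  sInf {n | ∃ D : Finset (EuclideanSpace ℝ (Fin d)), D.card = n ∧ (∀ v ∈ D, v ≠ 0) ∧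
    ∀ b ∈ frontier K, ∃ v ∈ D, Illuminates K v b}

/-!
An illuminating direction `v` of a boundary point also X-rays it, and interior points are
X-rayed by every direction, so an illuminating set X-rays `K` (as soon as it is nonempty).
Conversely, if the line through a boundary point `b` parallel to `v` meets the interior at
`b + t • v`, then `t ≠ 0`, so `b` is illuminated by `v` or by `-v`; hence the directions of an
X-ray set together with their negatives illuminate `K`. Both numbers are attained because
compactness of the boundary gives a finite illuminating set.
-/

open Pointwise

section

variable {d : ℕ} {K : Set (EuclideanSpace ℝ (Fin d))} {D : Finset (EuclideanSpace ℝ (Fin d))}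
  {v p : EuclideanSpace ℝ (Fin d)}

def IsIlluminatingSet (K : Set (EuclideanSpace ℝ (Fin d))) (D : Finset (EuclideanSpace ℝ (Fin d))) :
    Prop :=
  (∀ v ∈ D, v ≠ 0) ∧ ∀ b ∈ frontier K, ∃ v ∈ D, Illuminates K v b

def IsXRaySet (K : Set (EuclideanSpace ℝ (Fin d))) (D : Finset (EuclideanSpace ℝ (Fin d))) : Prop :=
  (∀ v ∈ D, v ≠ 0) ∧ ∀ p ∈ K, ∃ v ∈ D, IsXRayed K v p

theorem illumNumber_le_card (hD : IsIlluminatingSet K D) : illumNumber K ≤ D.card :=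
  Nat.sInf_le ⟨D, rfl, hD⟩

theorem xrayNumber_le_card (hD : IsXRaySet K D) : xrayNumber K ≤ D.card :=
  Nat.sInf_le ⟨D, rfl, hD⟩

theorem exists_isIlluminatingSet_card_eq_illumNumber (h : ∃ D, IsIlluminatingSet K D) :
    ∃ D, IsIlluminatingSet K D ∧ D.card = illumNumber K := by
  obtain ⟨D, hDcard, hD⟩ := Nat.sInf_mem (s := {n | ∃ D, D.card = n ∧ IsIlluminatingSet K D})
    (h.elim fun D hD => ⟨_, D, rfl, hD⟩)
  exact ⟨D, hD, hDcard⟩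

theorem exists_isXRaySet_card_eq_xrayNumber (h : ∃ D, IsXRaySet K D) :
    ∃ D, IsXRaySet K D ∧ D.card = xrayNumber K := by
  obtain ⟨D, hDcard, hD⟩ := Nat.sInf_mem (s := {n | ∃ D, D.card = n ∧ IsXRaySet K D})
    (h.elim fun D hD => ⟨_, D, rfl, hD⟩)
  exact ⟨D, hD, hDcard⟩

theorem Illuminates.isXRayed (h : Illuminates K v p) : IsXRayed K v p :=
  let ⟨t, _, ht⟩ := h
  ⟨t, ht⟩

theorem isXRayed_of_mem_interior (hp : p ∈ interior K) : IsXRayed K v p :=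
  ⟨0, by simpa using hp⟩

theorem IsXRayed.illuminates_or_illuminates_neg (h : IsXRayed K v p) (hp : p ∉ interior K) :
    Illuminates K v p ∨ Illuminates K (-v) p := by
  obtain ⟨t, ht⟩ := h
  rcases lt_trichotomy t 0 with htneg | rfl | htpos
  · exact Or.inr ⟨-t, neg_pos.2 htneg, by simpa using ht⟩
  · exact absurd (by simpa using ht) hp
  · exact Or.inl ⟨t, htpos, ht⟩

theorem IsIlluminatingSet.isXRaySet (hD : IsIlluminatingSet K D) (hK : IsClosed K)
    (hfr : (frontier K).Nonempty) : IsXRaySet K D := by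
  obtain ⟨b, hb⟩ := hfr
  obtain ⟨v₀, hv₀, -⟩ := hD.2 b hb
  refine ⟨hD.1, fun p hp => ?_⟩
  by_cases hpi : p ∈ interior K
  · exact ⟨v₀, hv₀, isXRayed_of_mem_interior hpi⟩
  · obtain ⟨v, hv, hill⟩ := hD.2 p (hK.frontier_eq ▸ ⟨hp, hpi⟩)
    exact ⟨v, hv, hill.isXRayed⟩

theorem IsXRaySet.isIlluminatingSet_union_neg (hD : IsXRaySet K D) (hK : IsClosed K) :
    IsIlluminatingSet K (D ∪ -D) := by
  refine ⟨fun v hv => ?_, fun b hb => ?_⟩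
  · rcases Finset.mem_union.1 hv with hv | hv
    · exact hD.1 v hv
    · obtain ⟨w, hw, rfl⟩ := Finset.mem_neg.1 hv
      simpa using hD.1 w hw
  · obtain ⟨v, hv, hx⟩ := hD.2 b (hK.frontier_subset hb)
    rcases hx.illuminates_or_illuminates_neg (hK.frontier_eq ▸ hb).2 with hill | hill
    · exact ⟨v, Finset.mem_union_left _ hv, hill⟩
    · exact ⟨-v, Finset.mem_union_right _ (Finset.neg_mem_neg hv), hill⟩

/-- The direction `o - b` towards an interior point `o` illuminates every point `x` near `b`,
since `x + (o - b)` stays near `o`. -/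
theorem exists_isIlluminatingSet (hK : Bornology.IsBounded K) (hint : (interior K).Nonempty) :
    ∃ D, IsIlluminatingSet K D := by
  classical
  obtain ⟨o, ho⟩ := hint
  have hfrc : IsCompact (frontier K) :=
    Metric.isCompact_of_isClosed_isBounded isClosed_frontier
      (hK.closure.subset frontier_subset_closure)
  obtain ⟨B, hBfr, hcover⟩ := hfrc.elim_nhds_subcover
    (fun b => (· + (o - b)) ⁻¹' interior K)
    (fun b _ => (isOpen_interior.preimage (continuous_add_const _)).mem_nhds
      (by simpa using ho))
  refine ⟨B.image (o - ·), fun v hv => ?_, fun x hx => ?_⟩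
  · obtain ⟨b, hb, rfl⟩ := Finset.mem_image.1 hv
    exact sub_ne_zero.2 fun hob => (hBfr b hb).2 (hob ▸ ho)
  · obtain ⟨b, hb, hxb⟩ := Set.mem_iUnion₂.1 (hcover hx)
    exact ⟨o - b, Finset.mem_image_of_mem _ hb, 1, one_pos, by simpa using hxb⟩

theorem xrayNumber_eq_zero_of_subsingleton [Subsingleton (EuclideanSpace ℝ (Fin d))] :
    xrayNumber K = 0 := by
  refine Nat.sInf_eq_zero.2 (K.eq_empty_or_nonempty.imp (fun hK => ⟨∅, by simp [hK]⟩) ?_)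
  rintro ⟨p, hp⟩
  refine Set.eq_empty_of_forall_notMem fun _ ⟨D, _, hD0, hD⟩ => ?_
  obtain ⟨v, hv, -⟩ := hD p hp
  exact hD0 v hv (Subsingleton.elim v 0)

theorem illumNumber_eq_zero_of_subsingleton [Subsingleton (EuclideanSpace ℝ (Fin d))] :
    illumNumber K = 0 :=
  Nat.sInf_eq_zero.2 (Or.inl ⟨∅, by simp⟩)

end

theorem xray_le_illum_le_two_xray_general {d : ℕ} (K : Set (EuclideanSpace ℝ (Fin d)))
    (hKc : IsCompact K) (hKint : (interior K).Nonempty) :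
    xrayNumber K ≤ illumNumber K ∧ illumNumber K ≤ 2 * xrayNumber K := by
  classical
  rcases subsingleton_or_nontrivial (EuclideanSpace ℝ (Fin d)) with _ | _
  · simp [xrayNumber_eq_zero_of_subsingleton, illumNumber_eq_zero_of_subsingleton]
  have hfr : (frontier K).Nonempty :=
    nonempty_frontier_iff.2 ⟨hKint.mono interior_subset,
      fun h => noncompact_univ (EuclideanSpace ℝ (Fin d)) (h ▸ hKc)⟩
  obtain ⟨D, hD, hDcard⟩ :=
    exists_isIlluminatingSet_card_eq_illumNumber (exists_isIlluminatingSet hKc.isBounded hKint)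
  have hDx : IsXRaySet K D := hD.isXRaySet hKc.isClosed hfr
  obtain ⟨E, hE, hEcard⟩ := exists_isXRaySet_card_eq_xrayNumber ⟨D, hDx⟩
  refine ⟨hDcard ▸ xrayNumber_le_card hDx, ?_⟩
  calc illumNumber K ≤ (E ∪ -E).card :=
        illumNumber_le_card (hE.isIlluminatingSet_union_neg hKc.isClosed)
    _ ≤ E.card + (-E).card := Finset.card_union_le _ _
    _ = 2 * xrayNumber K := by rw [Finset.card_neg, hEcard, two_mul]

theorem xray_le_illum_le_two_xray {d : ℕ} (K : Set (EuclideanSpace ℝ (Fin d)))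
    (hKc : IsCompact K) (hKconv : Convex ℝ K) (hKint : (interior K).Nonempty) :
    xrayNumber K ≤ illumNumber K ∧ illumNumber K ≤ 2 * xrayNumber K :=
  xray_le_illum_le_two_xray_general K hKc hKint
end

section
/- Let K be a convex body in ℝ^d, d > 2, let b be a boundary point of K, and let F be a face of K of smallest dimension containing b. Then b is X-rayed along a line L through the origin if and only if the great subsphere L^⊥ ∩ S^{d-1} is disjoint from the Gauss image ν(F) of F. -/
open scoped RealInnerProductSpace

/-- `F` is a face of `K`: the intersection of `K` with a supporting hyperplane. -/
def IsFaceOf {d : ℕ} (K F : Set (EuclideanSpace ℝ (Fin d))) : Prop :=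
  ∃ (n : EuclideanSpace ℝ (Fin d)) (c : ℝ), n ≠ 0 ∧ (∀ x ∈ K, ⟪n, x⟫ ≤ c) ∧
    (∃ x ∈ K, ⟪n, x⟫ = c) ∧ F = {x ∈ K | ⟪n, x⟫ = c}

/-- The Gauss image of a face `F` of `K`: all unit outer normals `n` whose supporting
hyperplane contains `F`. -/
def gaussImage {d : ℕ} (K F : Set (EuclideanSpace ℝ (Fin d))) :
    Set (EuclideanSpace ℝ (Fin d)) :=
  {n | ‖n‖ = 1 ∧ ∃ c : ℝ, (∀ x ∈ K, ⟪n, x⟫ ≤ c) ∧ ∀ y ∈ F, ⟪n, y⟫ = c}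

/-! If the line through `b` in direction `v` meets the interior of `K`, it crosses every
supporting hyperplane through `b`, in particular each one containing `F`, so no normal of `F` is
orthogonal to `v`. Conversely, if the line misses the interior, Hahn–Banach separates the two by a
hyperplane that supports `K` at `b` and is parallel to `v`. Cutting `F` with it gives a face
containing `b`; minimality of `dim F` forces this face to have the affine span of `F`, so the
hyperplane contains `F` and its unit normal is a point of `ν(F)` orthogonal to `v`. -/

theorem affineSpan_eq_of_subset_of_finrank_direction_le {k V P : Type*} [DivisionRing k]
    [AddCommGroup V] [Module k V] [AddTorsor V P] [FiniteDimensional k V] {s t : Set P}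
    (hst : s ⊆ t) (hs : s.Nonempty)
    (hrank : Module.finrank k (affineSpan k t).direction ≤
      Module.finrank k (affineSpan k s).direction) :
    affineSpan k s = affineSpan k t :=
  AffineSubspace.eq_of_direction_eq_of_nonempty_of_le
    (Submodule.eq_of_le_of_finrank_le (AffineSubspace.direction_le (affineSpan_mono k hst)) hrank)
    ((affineSpan_nonempty k).2 hs) (affineSpan_mono k hst)

section Functional

variable {E : Type*} [AddCommGroup E] [Module ℝ E] [TopologicalSpace E]
  [IsTopologicalAddGroup E] [ContinuousSMul ℝ E]

theorem StrongDual.apply_lt_of_mem_interior {f : StrongDual ℝ E} (hf : f ≠ 0) {K : Set E}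
    {c : ℝ} (hK : ∀ x ∈ K, f x ≤ c) {x : E} (hx : x ∈ interior K) : f x < c := by
  have hsub : f '' interior K ⊆ interior (Set.Iic c) :=
    interior_maximal (fun _ ⟨y, hy, hfy⟩ => hfy ▸ hK y (interior_subset hy))
      (ContinuousLinearMap.isOpenMap_of_ne_zero f hf _ isOpen_interior)
  rw [interior_Iic] at hsub
  exact hsub ⟨x, hx, rfl⟩

theorem Convex.exists_strongDual_of_line_disjoint_interior {K : Set E} (hK : Convex ℝ K)
    (hint : (interior K).Nonempty) {b v : E} (hbK : b ∈ K)
    (hline : ∀ t : ℝ, b + t • v ∉ interior K) :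
    ∃ f : StrongDual ℝ E, f ≠ 0 ∧ (∀ x ∈ K, f x ≤ f b) ∧ f v = 0 := by
  set L : AffineSubspace ℝ E := AffineSubspace.mk' b (ℝ ∙ v)
  have hdisj : Disjoint (interior K) L := by
    refine Set.disjoint_left.2 fun x hx hxL => ?_
    obtain ⟨t, ht⟩ := Submodule.mem_span_singleton.1 (AffineSubspace.mem_mk'.1 hxL)
    exact hline t (by rwa [ht, vsub_eq_sub, add_sub_cancel])
  obtain ⟨f, u, hlt, hge⟩ :=
    geometric_hahn_banach_open hK.interior isOpen_interior L.convex hdisj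
  have hlineL : ∀ t : ℝ, b + t • v ∈ L := fun t =>
    AffineSubspace.mem_mk'.2 <| by
      simpa using Submodule.smul_mem _ t (Submodule.mem_span_singleton_self v)
  have hKle : ∀ x ∈ K, f x ≤ u := by
    intro x hx
    have hcl : closure (interior K) ⊆ {z | f z ≤ u} :=
      closure_minimal (fun z hz => (hlt z hz).le) (isClosed_le f.continuous continuous_const)
    exact hcl ((hK.closure_interior_eq_closure_of_nonempty_interior hint).symm ▸ subset_closure hx)
  have hfb : f b = u := le_antisymm (hKle b hbK) (by simpa using hge _ (hlineL 0))
  refine ⟨f, fun hf => ?_, fun x hx => hfb ▸ hKle x hx, ?_⟩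
  · obtain ⟨y, hy⟩ := hint
    have := hlt y hy
    simp only [hf, zero_apply] at this hfb
    linarith
  · have := hge _ (hlineL (-f v))
    rw [map_add, map_smul, smul_eq_mul, hfb] at this
    nlinarith [sq_nonneg (f v)]

end Functional

section InnerProduct

variable {E : Type*} [NormedAddCommGroup E] [InnerProductSpace ℝ E]

theorem inner_lt_of_mem_interior {K : Set E} {n : E} {c : ℝ} (hn : n ≠ 0)
    (hK : ∀ x ∈ K, ⟪n, x⟫ ≤ c) {x : E} (hx : x ∈ interior K) : ⟪n, x⟫ < c :=
  StrongDual.apply_lt_of_mem_interior (f := innerSL ℝ n)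
    (fun h => hn (by simpa using congr($h n))) hK hx

theorem Convex.exists_normal_of_line_disjoint_interior [CompleteSpace E] {K : Set E}
    (hK : Convex ℝ K) (hint : (interior K).Nonempty) {b v : E} (hbK : b ∈ K)
    (hline : ∀ t : ℝ, b + t • v ∉ interior K) :
    ∃ n : E, n ≠ 0 ∧ (∀ x ∈ K, ⟪n, x⟫ ≤ ⟪n, b⟫) ∧ ⟪n, v⟫ = 0 := by
  obtain ⟨f, hf, hKf, hfv⟩ := hK.exists_strongDual_of_line_disjoint_interior hint hbK hline
  refine ⟨(InnerProductSpace.toDual ℝ E).symm f, by simpa using hf, ?_, ?_⟩ <;>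
    simp only [InnerProductSpace.toDual_symm_apply]
  exacts [hKf, hfv]

end InnerProduct

section Faces

variable {d : ℕ} {K F : Set (EuclideanSpace ℝ (Fin d))}

theorem IsFaceOf.subset (hF : IsFaceOf K F) : F ⊆ K := by
  obtain ⟨n, c, -, -, -, rfl⟩ := hF
  exact Set.sep_subset K _

theorem IsFaceOf.inter_supporting_hyperplane (hF : IsFaceOf K F) (hint : (interior K).Nonempty)
    {b n : EuclideanSpace ℝ (Fin d)} (hbF : b ∈ F) (hn : n ≠ 0)
    (hsup : ∀ x ∈ K, ⟪n, x⟫ ≤ ⟪n, b⟫) : IsFaceOf K {x ∈ F | ⟪n, x⟫ = ⟪n, b⟫} := by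
  obtain ⟨m, c, hm, hmK, -, rfl⟩ := hF
  obtain ⟨hbK, hmb⟩ := hbF
  refine ⟨m + n, c + ⟪n, b⟫, fun hmn => ?_, fun x hx => ?_, ⟨b, hbK, ?_⟩, ?_⟩
  · -- `n = -m` would put an interior point strictly on both sides of `{x | ⟪m, x⟫ = c}`.
    obtain ⟨y, hy⟩ := hint
    have hmy := inner_lt_of_mem_interior hm hmK hy
    have hny := inner_lt_of_mem_interior hn hsup hy
    rw [eq_neg_of_add_eq_zero_right hmn, inner_neg_left, inner_neg_left] at hny
    linarith
  · rw [inner_add_left]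
    exact add_le_add (hmK x hx) (hsup x hx)
  · rw [inner_add_left, hmb]
  · ext x
    simp only [Set.mem_ofPred_eq, inner_add_left]
    constructor
    · rintro ⟨⟨hxK, hmx⟩, hnx⟩
      exact ⟨hxK, by rw [hmx, hnx]⟩
    · rintro ⟨hxK, hx⟩
      have := hmK x hxK
      have := hsup x hxK
      exact ⟨⟨hxK, by linarith⟩, by linarith⟩

theorem IsFaceOf.inner_eq_of_finrank_minimal (hF : IsFaceOf K F)
    (hint : (interior K).Nonempty) {b n : EuclideanSpace ℝ (Fin d)} (hbF : b ∈ F)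
    (hmin : ∀ F' : Set (EuclideanSpace ℝ (Fin d)), IsFaceOf K F' → b ∈ F' →
      Module.finrank ℝ (affineSpan ℝ F).direction ≤
        Module.finrank ℝ (affineSpan ℝ F').direction)
    (hn : n ≠ 0) (hsup : ∀ x ∈ K, ⟪n, x⟫ ≤ ⟪n, b⟫) : ∀ y ∈ F, ⟪n, y⟫ = ⟪n, b⟫ := by
  set G := {x ∈ F | ⟪n, x⟫ = ⟪n, b⟫}
  have hbG : b ∈ G := ⟨hbF, rfl⟩
  have hspan : affineSpan ℝ G = affineSpan ℝ F :=
    affineSpan_eq_of_subset_of_finrank_direction_le (Set.sep_subset F _) ⟨b, hbG⟩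
      (hmin G (hF.inter_supporting_hyperplane hint hbF hn hsup) hbG)
  have hG : Set.EqOn (innerₛₗ ℝ n).toAffineMap (AffineMap.const ℝ _ ⟪n, b⟫) G :=
    fun x hx => hx.2
  intro y hy
  simpa using AffineMap.eqOn_affineSpan hG (hspan ▸ subset_affineSpan ℝ F hy)

theorem inv_norm_smul_mem_gaussImage {n : EuclideanSpace ℝ (Fin d)} {c : ℝ} (hn : n ≠ 0)
    (hK : ∀ x ∈ K, ⟪n, x⟫ ≤ c) (hF : ∀ y ∈ F, ⟪n, y⟫ = c) : ‖n‖⁻¹ • n ∈ gaussImage K F := by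
  refine ⟨norm_smul_inv_norm hn, ‖n‖⁻¹ * c, fun x hx => ?_, fun y hy => ?_⟩
  · rw [real_inner_smul_left]
    exact mul_le_mul_of_nonneg_left (hK x hx) (by positivity)
  · rw [real_inner_smul_left, hF y hy]

end Faces

theorem xrayed_iff_gauss_image_misses_great_sphere_general {d : ℕ}
    (K : Set (EuclideanSpace ℝ (Fin d)))
    (hKconv : Convex ℝ K) (hKint : (interior K).Nonempty)
    (b : EuclideanSpace ℝ (Fin d))
    (F : Set (EuclideanSpace ℝ (Fin d))) (hF : IsFaceOf K F) (hbF : b ∈ F)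
    (hmin : ∀ F' : Set (EuclideanSpace ℝ (Fin d)), IsFaceOf K F' → b ∈ F' →
      Module.finrank ℝ (affineSpan ℝ F).direction ≤
        Module.finrank ℝ (affineSpan ℝ F').direction)
    (v : EuclideanSpace ℝ (Fin d)) :
    (∃ t : ℝ, b + t • v ∈ interior K) ↔
      ∀ n ∈ gaussImage K F, ⟪n, v⟫ ≠ 0 := by
  constructor
  · rintro ⟨t, ht⟩ n ⟨hn1, c, hK, hFc⟩ hnv
    have hlt := inner_lt_of_mem_interior (norm_ne_zero_iff.1 (hn1 ▸ one_ne_zero)) hK ht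
    rw [inner_add_right, real_inner_smul_right, hnv, mul_zero, add_zero, hFc b hbF] at hlt
    exact hlt.false
  · intro hgauss
    by_contra! hline
    obtain ⟨n, hn, hsup, hnv⟩ :=
      hKconv.exists_normal_of_line_disjoint_interior hKint (hF.subset hbF) hline
    refine hgauss _ (inv_norm_smul_mem_gaussImage hn hsup
      (hF.inner_eq_of_finrank_minimal hKint hbF hmin hn hsup)) ?_
    rw [real_inner_smul_left, hnv, mul_zero]

theorem xrayed_iff_gauss_image_misses_great_sphere {d : ℕ} (hd : 2 < d)
    (K : Set (EuclideanSpace ℝ (Fin d)))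
    (hKc : IsCompact K) (hKconv : Convex ℝ K) (hKint : (interior K).Nonempty)
    (b : EuclideanSpace ℝ (Fin d)) (hb : b ∈ frontier K)
    (F : Set (EuclideanSpace ℝ (Fin d))) (hF : IsFaceOf K F) (hbF : b ∈ F)
    (hmin : ∀ F' : Set (EuclideanSpace ℝ (Fin d)), IsFaceOf K F' → b ∈ F' →
      Module.finrank ℝ (affineSpan ℝ F).direction ≤
        Module.finrank ℝ (affineSpan ℝ F').direction)
    (v : EuclideanSpace ℝ (Fin d)) (hv : v ≠ 0) :
    (∃ t : ℝ, b + t • v ∈ interior K) ↔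
      ∀ n ∈ gaussImage K F, ⟪n, v⟫ ≠ 0 :=
  xrayed_iff_gauss_image_misses_great_sphere_general K hKconv hKint b F hF hbF hmin v
end

section
/- Let x, y be determined by the equations cos x = cos(11.25°)·cos y and cos x = cos(33.548°)·sin y with 0 < y < π/2, 0 < x < π/2. Then x < arccos(√(2/5)). -/
/-!
Squaring the two equations and eliminating `y` via `sin² y + cos² y = 1` gives
`1 / cos² x = 1 / cos² (π/16) + 1 / cos² r_c`, so `cos² x` is half the harmonic mean of
`cos² (π/16)` and `cos² r_c`. That mean is monotone in both arguments, and the lower bounds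
`cos² (π/16) ≥ 0.961925` (from the closed form of `cos (π/16)`) and `cos² r_c ≥ 0.6865`
(from `cos r ≥ 1 - r²/2`) already push it above `2/5`.
-/

open Real

lemma sq_mul_add_sq_eq_of_eq_mul_cos_of_eq_mul_sin {t a b y : ℝ}
    (h₁ : t = a * cos y) (h₂ : t = b * sin y) :
    t ^ 2 * (a ^ 2 + b ^ 2) = a ^ 2 * b ^ 2 := by
  linear_combination (b ^ 2 * (t + a * cos y)) * h₁ + (a ^ 2 * (t + b * sin y)) * h₂ +
    a ^ 2 * b ^ 2 * sin_sq_add_cos_sq y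

lemma mul_div_add_le_mul_div_add {A B p q : ℝ} (hA : 0 < A) (hB : 0 < B)
    (hp : A ≤ p) (hq : B ≤ q) : A * B / (A + B) ≤ p * q / (p + q) := by
  rw [div_le_div_iff₀ (by positivity) (by linarith)]
  nlinarith [mul_le_mul_of_nonneg_left hq (by nlinarith : 0 ≤ A * p),
    mul_le_mul_of_nonneg_left hp (by nlinarith : 0 ≤ B * q)]

lemma cos_pi_div_sixteen_sq_ge : (0.961925 : ℝ) ≤ cos (π / 16) ^ 2 := by
  have hsqrt2 : (1.4142 : ℝ) ≤ √2 := Real.le_sqrt_of_sq_le (by norm_num)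
  have hsqrt2' : (1.8477 : ℝ) ≤ √(2 + √2) := Real.le_sqrt_of_sq_le (by nlinarith)
  rw [cos_pi_div_sixteen, div_pow, sq_sqrt (by positivity)]
  linarith

lemma cos_sq_ge_of_le {r : ℝ} (hr₀ : 0 ≤ r) (hr : r ≤ 0.58555) : (0.6865 : ℝ) ≤ cos r ^ 2 := by
  have hcos : (0.8285654 : ℝ) ≤ cos r := by
    nlinarith [one_sub_sq_div_two_le_cos (x := r)]
  nlinarith

theorem dim_five_numerical_general (x y rc : ℝ)
    (hx : 0 < x) (hx' : x < π / 2)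
    (hrc0 : 0 ≤ rc) (hrc : rc ≤ 0.58555)
    (h1 : cos x = cos (π / 16) * cos y)
    (h2 : cos x = cos rc * sin y) :
    x < Real.arccos (Real.sqrt (2 / 5)) := by
  have hcos_pos : 0 < cos x := cos_pos_of_mem_Ioo ⟨by linarith [pi_pos], hx'⟩
  have hcos_sq :
      cos x ^ 2 = cos (π / 16) ^ 2 * cos rc ^ 2 / (cos (π / 16) ^ 2 + cos rc ^ 2) := by
    have hsum : 0 < cos (π / 16) ^ 2 + cos rc ^ 2 := by
      nlinarith [cos_pi_div_sixteen_sq_ge, sq_nonneg (cos rc)]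
    rw [eq_div_iff hsum.ne']
    exact sq_mul_add_sq_eq_of_eq_mul_cos_of_eq_mul_sin h1 h2
  have hbound : (2 / 5 : ℝ) < cos x ^ 2 := by
    calc (2 / 5 : ℝ) < 0.961925 * 0.6865 / (0.961925 + 0.6865) := by norm_num
      _ ≤ cos x ^ 2 := hcos_sq ▸ mul_div_add_le_mul_div_add (by norm_num) (by norm_num)
          cos_pi_div_sixteen_sq_ge (cos_sq_ge_of_le hrc0 hrc)
  have hlt : √(2 / 5) < cos x := (sqrt_lt' hcos_pos).2 hbound
  calc x = arccos (cos x) := (arccos_cos hx.le (by linarith [pi_pos])).symm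
    _ < arccos √(2 / 5) :=
      arccos_lt_arccos (by linarith [sqrt_nonneg (2 / 5 : ℝ)]) hlt (cos_le_one x)

theorem dim_five_numerical (x y rc : ℝ)
    (hx : 0 < x) (hx' : x < π / 2) (hy : 0 < y) (hy' : y < π / 2)
    (hrc0 : 0 ≤ rc) (hrc : rc ≤ 0.58555)
    (h1 : cos x = cos (π / 16) * cos y)
    (h2 : cos x = cos rc * sin y) :
    x < Real.arccos (Real.sqrt (2 / 5)) :=
  dim_five_numerical_general x y rc hx hx' hrc0 hrc h1 h2
end

section
/- If r_c ≤ 0.3961 rad (≈ 22.691°), then arccos(cos(r_c)·cos(π/4)) < arccos(√(5/12)). -/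
open Real

-- `0.92` clears `√(5/6) ≈ 0.9129`, the value of `cos x` at which `cos x · cos (π/4) = √(5/12)`.
lemma lt_cos_of_abs_le {x : ℝ} (hx : |x| ≤ 0.3961) : (0.92 : ℝ) < cos x := by
  have hsq : x ^ 2 ≤ 0.3961 ^ 2 := sq_le_sq' (abs_le.mp hx).1 (abs_le.mp hx).2
  linarith [one_sub_sq_div_two_le_cos (x := x)]

lemma sqrt_div_two_lt_mul_cos_pi_div_four {a c : ℝ} (hc : 0 < c) (h : a < c ^ 2) :
    √(a / 2) < c * cos (π / 4) := by
  rw [cos_pi_div_four, sqrt_lt' (by positivity), mul_div_assoc', div_pow, mul_pow,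
    sq_sqrt zero_le_two]
  linarith

theorem dim_six_numerical (rc : ℝ) (hrc0 : 0 ≤ rc) (hrc : rc ≤ 0.3961) :
    Real.arccos (cos rc * cos (π / 4)) < Real.arccos (Real.sqrt (5 / 12)) := by
  have hcos : (0.92 : ℝ) < cos rc := lt_cos_of_abs_le (by rwa [abs_of_nonneg hrc0])
  have hkey : √(5 / 12) < cos rc * cos (π / 4) := by
    have h := sqrt_div_two_lt_mul_cos_pi_div_four (a := 5 / 6) (by linarith)
      (by nlinarith : (5 / 6 : ℝ) < cos rc ^ 2)
    rwa [show (5 / 6 : ℝ) / 2 = 5 / 12 by norm_num] at h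
  have hcos_pi_div_four : 0 ≤ cos (π / 4) := by rw [cos_pi_div_four]; positivity
  exact arccos_lt_arccos (by linarith [sqrt_nonneg (5 / 12)]) hkey
    (mul_le_one₀ (cos_le_one rc) hcos_pi_div_four (cos_le_one _))
end
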